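/- arXiv:2206.15372 — 3 statements merged into one kernel-verified Lean document; each statement's English description precedes it below -/
import Mathlib

section
/- For every integer n ≥ 1 and every integer k ≥ 2 with k ≡ k_ε (mod p−1): if d_k^ur ≥ n then m_n(k) = 0; moreover d_k^ur ≥ n holds whenever k/(p²−1) > n/2 + 2. Consequently, for each fixed n ≥ 1 there are only finitely many k with m_n(k) ≠ 0, so the ghost coefficient g_n(w) := ∏_{k ≥ 2, k ≡ k_ε (mod p−1)} (w − w_k)^{m_n(k)} is a polynomial in ℤ_p[w]. -/
open Polynomial

noncomputable section

namespace LocalGhost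

/-- `{m}`: the unique representative of `m` modulo `p-1` in `[0, p-2]`. -/
def hres (p m : ℤ) : ℤ := m % (p - 1)

def kEps (p a s : ℤ) : ℤ := 2 + hres p (a + 2 * s)

def dlt (p a s : ℤ) : ℤ := (s + hres p (a + s)) / (p - 1)

def t1 (p a s : ℤ) : ℤ :=
  if a + s < p - 1 then s + dlt p a s else hres p (a + s) + dlt p a s + 1

def t2 (p a s : ℤ) : ℤ :=
  if a + s < p - 1 then a + s + dlt p a s + 2 else s + dlt p a s + 1

def kbul (p a s k : ℤ) : ℤ := (k - kEps p a s) / (p - 1)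

def dIw (p a s k : ℤ) : ℤ := 2 * kbul p a s k + 2 - 2 * dlt p a s

def dUr (p a s k : ℤ) : ℤ :=
  (kbul p a s k - t1 p a s) / (p + 1) + (kbul p a s k - t2 p a s) / (p + 1) + 2

def dNew (p a s k : ℤ) : ℤ := dIw p a s k - 2 * dUr p a s k

def betaN (p a s n : ℤ) : ℤ := if Even n then t1 p a s else t2 p a s - (p + 1) / 2

/-- The ghost multiplicity `m_n(k)`. -/
def mGhost (p a s n k : ℤ) : ℕ :=
  if 2 ≤ k ∧ (p - 1) ∣ (k - kEps p a s) ∧ dUr p a s k < n ∧ n < dIw p a s k - dUr p a s k then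
    (min (n - dUr p a s k) (dIw p a s k - dUr p a s k - n)).toNat
  else 0

variable (p : ℕ) [Fact p.Prime]

/-- `w_k = exp(p(k-2)) - 1 ∈ ℤ_p ⊆ ℚ_p`. -/
def wk (k : ℤ) : ℚ_[p] :=
  NormedSpace.exp ((p : ℚ_[p]) * ((k : ℚ_[p]) - 2)) - 1

/-- The ghost coefficient `g_n(w)` as a polynomial with `ℚ_p` coefficients. -/
def gg (a s n : ℤ) : Polynomial ℚ_[p] :=
  ∏ᶠ k : ℤ, (X - C (wk p k)) ^ mGhost p a s n k

/-- `g_{n,k̂₀}(w) = g_n(w)/(w-w_{k₀})^{m_n(k₀)}`. -/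
def ggHat (a s n k0 : ℤ) : Polynomial ℚ_[p] :=
  ∏ᶠ k : ℤ, if k = k0 then 1 else (X - C (wk p k)) ^ mGhost p a s n k

/-- `v_p(g_n(w_k))`. -/
def vg (a s n k : ℤ) : ℤ := ((gg p a s n).eval (wk p k)).valuation

/-- `v_p(g_{n,k̂₀}(w_{k₀}))`. -/
def vgHat (a s n k0 : ℤ) : ℤ := ((ggHat p a s n k0).eval (wk p k0)).valuation

/-- `Δ'_{k,ℓ}`. -/
def DeltaP (a s k l : ℤ) : ℝ :=
  (vgHat p a s (dIw p a s k / 2 + l) k : ℝ) - (k - 2) * l / 2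

/-- `Δ_{k,ℓ}`: the value at `ℓ` of the lower convex hull of the points `(i, Δ'_{k,i})`. -/
def DeltaH (a s k l : ℤ) : ℝ :=
  sInf (insert (DeltaP p a s k l)
    {y : ℝ | ∃ i j : ℤ, -(dNew p a s k / 2) ≤ i ∧ i ≤ dNew p a s k / 2 ∧
      -(dNew p a s k / 2) ≤ j ∧ j ≤ dNew p a s k / 2 ∧ i ≤ l ∧ l ≤ j ∧ i < j ∧
      y = (((j : ℝ) - l) * DeltaP p a s k i + ((l : ℝ) - i) * DeltaP p a s k j) / ((j : ℝ) - i)})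

/-- The value at `n` of the lower boundary of the convex hull of points `(i, v i)`, `i ∈ D`. -/
def NPval (v : ℤ → ℝ) (D : Set ℤ) (n : ℤ) : ℝ :=
  sInf ({y : ℝ | n ∈ D ∧ y = v n} ∪
    {y : ℝ | ∃ i j : ℤ, i ∈ D ∧ j ∈ D ∧ i ≤ n ∧ n ≤ j ∧ i < j ∧
      y = (((j : ℝ) - n) * v i + ((n : ℝ) - i) * v j) / ((j : ℝ) - i)})


section Aux

lemma LGaux.norm_fact_inv (p : ℕ) [hp : Fact p.Prime] (n : ℕ) :
    ‖((n.factorial : ℚ_[p]))⁻¹‖ ≤ (p : ℝ) ^ n := by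
  have hfac : (n.factorial : ℚ) ≠ 0 := by exact_mod_cast n.factorial_ne_zero
  have hval : padicValRat p (n.factorial : ℚ) = padicValNat p n.factorial := padicValRat.of_nat
  have hnorm : ‖((n.factorial : ℚ) : ℚ_[p])‖ = (padicNorm p (n.factorial : ℚ) : ℝ) :=
    Padic.eq_padicNorm _
  have hpn : padicNorm p (n.factorial : ℚ) = (p : ℚ) ^ (-padicValRat p (n.factorial : ℚ)) :=
    padicNorm.eq_zpow_of_nonzero hfac
  have hvle : padicValNat p n.factorial ≤ n := by
    have h5 := sub_one_mul_padicValNat_factorial (p := p) n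
    have h2 : 2 ≤ p := hp.out.two_le
    have h3 : padicValNat p n.factorial ≤ (p - 1) * padicValNat p n.factorial :=
      Nat.le_mul_of_pos_left _ (by omega)
    omega
  have hcast : ((n.factorial : ℚ) : ℚ_[p]) = ((n.factorial : ℚ_[p])) := by push_cast; ring
  rw [norm_inv, ← hcast, hnorm, hpn, hval]
  rw [show ((((p:ℚ) ^ (-(padicValNat p n.factorial : ℤ))) : ℚ) : ℝ)
      = (p:ℝ) ^ (-(padicValNat p n.factorial : ℤ)) from by
    rw [Rat.cast_zpow, Rat.cast_natCast]]
  rw [← zpow_neg, neg_neg]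
  have hp1 : (1 : ℝ) ≤ (p : ℝ) := by exact_mod_cast hp.out.one_le
  calc ((p:ℝ) ^ (padicValNat p n.factorial : ℤ)) ≤ (p:ℝ) ^ (n : ℤ) := by
        apply zpow_le_zpow_right₀ hp1; exact_mod_cast hvle
    _ = (p:ℝ) ^ n := by norm_num

lemma LGaux.norm_exp_sub_one_le (p : ℕ) [hp : Fact p.Prime] (x : ℚ_[p])
    (hx : ‖x‖ ≤ (p : ℝ)⁻¹) : ‖NormedSpace.exp x - 1‖ ≤ 1 := by
  have hp0 : (0 : ℝ) < p := by exact_mod_cast hp.out.pos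
  have hexp : ‖NormedSpace.exp x‖ ≤ 1 := by
    rw [NormedSpace.exp_eq_tsum ℚ_[p]]
    refine IsUltrametricDist.norm_tsum_le_of_forall_le_of_nonneg zero_le_one fun n => ?_
    rw [norm_smul, norm_pow]
    calc ‖((n.factorial : ℚ_[p]))⁻¹‖ * ‖x‖ ^ n
        ≤ (p : ℝ) ^ n * ((p : ℝ)⁻¹) ^ n := by
          apply mul_le_mul (LGaux.norm_fact_inv p n)
            (pow_le_pow_left₀ (norm_nonneg x) hx n)
            (pow_nonneg (norm_nonneg x) n) (pow_nonneg hp0.le n)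
      _ = 1 := by rw [← mul_pow, mul_inv_cancel₀ hp0.ne', one_pow]
  calc ‖NormedSpace.exp x - 1‖ ≤ max ‖NormedSpace.exp x‖ ‖(1 : ℚ_[p])‖ := by
        rw [sub_eq_add_neg]
        simpa using IsUltrametricDist.norm_add_le_max (NormedSpace.exp x) (-1)
    _ ≤ 1 := by rw [norm_one]; exact max_le hexp le_rfl

lemma LGaux.coeff_mul_le {p : ℕ} [Fact p.Prime] {f g : Polynomial ℚ_[p]}
    (hf : ∀ i, ‖f.coeff i‖ ≤ 1) (hg : ∀ i, ‖g.coeff i‖ ≤ 1) :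
    ∀ i, ‖(f * g).coeff i‖ ≤ 1 := by
  intro i
  rw [Polynomial.coeff_mul]
  refine IsUltrametricDist.norm_sum_le_of_forall_le_of_nonneg zero_le_one fun j _ => ?_
  rw [norm_mul]
  exact mul_le_one₀ (hf _) (norm_nonneg _) (hg _)

lemma LGaux.coeff_one_le {p : ℕ} [Fact p.Prime] :
    ∀ i, ‖(1 : Polynomial ℚ_[p]).coeff i‖ ≤ 1 := by
  intro i
  rw [Polynomial.coeff_one]
  split <;> simp

lemma LGaux.coeff_XC_pow_le {p : ℕ} [Fact p.Prime] {w : ℚ_[p]} (hw : ‖w‖ ≤ 1) (m : ℕ) :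
    ∀ i, ‖((Polynomial.X - Polynomial.C w) ^ m).coeff i‖ ≤ 1 := by
  have hbase : ∀ i, ‖(Polynomial.X - Polynomial.C w).coeff i‖ ≤ 1 := by
    intro i
    rw [Polynomial.coeff_sub]
    match i with
    | 0 => simpa using hw
    | 1 => simp
    | (n+2) => simp [Polynomial.coeff_C, Polynomial.coeff_X]
  induction m with
  | zero => simpa using LGaux.coeff_one_le (p := p)
  | succ m ih => rw [pow_succ]; exact LGaux.coeff_mul_le ih hbase

end Aux

/-- For every `n ≥ 1` and `k ≥ 2` with `k ≡ k_ε (mod p-1)`: if `d_k^ur ≥ n`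
then `m_n(k) = 0`; `d_k^ur ≥ n` holds whenever `k/(p²-1) > n/2 + 2`; consequently for each
fixed `n ≥ 1`, `m_n(k) ≠ 0` for only finitely many `k`, so the ghost coefficient
`g_n(w) = ∏ (w - w_k)^{m_n(k)}` is a polynomial, with coefficients in `ℤ_p`. -/
theorem statement1 (p : ℕ) [Fact p.Prime] (hp5 : 5 ≤ p) (a s : ℤ)
    (ha1 : 1 ≤ a) (ha2 : a ≤ (p : ℤ) - 4) (hs1 : 0 ≤ s) (hs2 : s ≤ (p : ℤ) - 2) :
    (∀ n k : ℤ, 1 ≤ n → 2 ≤ k → ((p : ℤ) - 1) ∣ (k - kEps p a s) →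
      n ≤ dUr p a s k → mGhost p a s n k = 0) ∧
    (∀ n k : ℤ, 1 ≤ n → 2 ≤ k → ((p : ℤ) - 1) ∣ (k - kEps p a s) →
      (n : ℚ) / 2 + 2 < (k : ℚ) / ((p : ℚ) ^ 2 - 1) → n ≤ dUr p a s k) ∧
    (∀ n : ℤ, 1 ≤ n → {k : ℤ | mGhost p a s n k ≠ 0}.Finite) ∧
    (∀ n : ℤ, 1 ≤ n → ∀ i : ℕ, ‖(gg p a s n).coeff i‖ ≤ 1) := by
  have hPrime : p.Prime := Fact.out
  have hp5' : (5 : ℤ) ≤ (p : ℤ) := by exact_mod_cast hp5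
  set P : ℤ := (p : ℤ) with hPdef
  -- basic bounds on the building blocks
  have hres_bd : ∀ m : ℤ, 0 ≤ hres P m ∧ hres P m ≤ P - 2 := by
    intro m
    unfold hres
    constructor
    · exact Int.emod_nonneg m (by omega)
    · have := Int.emod_lt_of_pos m (show (0:ℤ) < P - 1 by omega); omega
  have hkE1 : 2 ≤ kEps P a s := by have := (hres_bd (a + 2*s)).1; unfold kEps; omega
  have hkE2 : kEps P a s ≤ P := by have := (hres_bd (a + 2*s)).2; unfold kEps; omega
  have hdlt1 : 0 ≤ dlt P a s := Int.ediv_nonneg (by have := (hres_bd (a+s)).1; omega) (by omega)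
  have hdlt2 : dlt P a s ≤ 1 := by
    have h1 := (hres_bd (a+s)).2
    have h2 := (hres_bd (a+s)).1
    have h3 : (s + hres P (a+s)) / (P-1) < 2 := by
      rw [Int.ediv_lt_iff_lt_mul (by omega : (0:ℤ) < P - 1)]
      omega
    exact Int.lt_add_one_iff.mp h3
  have hT : t1 P a s + t2 P a s ≤ 3*P - 4 := by
    have h1 := (hres_bd (a+s)).2
    have h2 := (hres_bd (a+s)).1
    unfold t1 t2
    split <;> omega
  -- the key integer form of Statement (2)
  have aux2 : ∀ n k : ℤ, 1 ≤ n → 2 ≤ k → (P - 1) ∣ (k - kEps P a s) →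
      (n + 4) * (P ^ 2 - 1) < 2 * k → n ≤ dUr P a s k := by
    intro n k hn hk hdvd h2k
    have hkb : (k - kEps P a s) / (P - 1) * (P - 1) = k - kEps P a s :=
      Int.ediv_mul_cancel hdvd
    set kb : ℤ := kbul P a s k with hkbdef
    have hkb' : kb * (P - 1) = k - kEps P a s := hkb
    set T : ℤ := t1 P a s + t2 P a s with hTdef
    -- H : n * (P+1) + T ≤ 2 * kb
    have H : n * (P + 1) + T ≤ 2 * kb := by
      have h1 : (n * (P+1) + T) * (P - 1) ≤ (2 * kb) * (P - 1) := by
        have e1 : (n * (P+1) + T) * (P-1) ≤ ((n+4)*(P+1) - (P+8)) * (P-1) := by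
          have h3 : n * (P+1) + T ≤ (n+4)*(P+1) - (P+8) := by nlinarith
          nlinarith
        have e2 : (2 * kb) * (P - 1) = 2 * k - 2 * kEps P a s := by
          rw [show (2*kb)*(P-1) = 2*(kb*(P-1)) by ring, hkb']; ring
        nlinarith
      exact le_of_mul_le_mul_right h1 (by omega)
    -- floor estimate
    have hd1 := Int.mul_ediv_add_emod (kb - t1 P a s) (P + 1)
    have hd2 := Int.mul_ediv_add_emod (kb - t2 P a s) (P + 1)
    have hr1a : 0 ≤ (kb - t1 P a s) % (P + 1) := Int.emod_nonneg _ (by omega)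
    have hr1b : (kb - t1 P a s) % (P + 1) < P + 1 := Int.emod_lt_of_pos _ (by omega)
    have hr2a : 0 ≤ (kb - t2 P a s) % (P + 1) := Int.emod_nonneg _ (by omega)
    have hr2b : (kb - t2 P a s) % (P + 1) < P + 1 := Int.emod_lt_of_pos _ (by omega)
    show n ≤ (kb - t1 P a s) / (P+1) + (kb - t2 P a s) / (P+1) + 2
    by_contra hcon
    push_neg at hcon
    have hq : (kb - t1 P a s) / (P+1) + (kb - t2 P a s) / (P+1) ≤ n - 3 := by omega
    have hmul : (P + 1) * ((kb - t1 P a s) / (P+1) + (kb - t2 P a s) / (P+1))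
        ≤ (P + 1) * (n - 3) := mul_le_mul_of_nonneg_left hq (by omega)
    nlinarith
  refine ⟨?_, ?_, ?_, ?_⟩
  · -- Statement (1)
    intro n k _ _ _ hge
    rw [mGhost, if_neg]
    rintro ⟨-, -, hlt, -⟩
    omega
  · -- Statement (2)
    intro n k hn hk hdvd hq
    have hp2 : (0 : ℚ) < (p : ℚ) ^ 2 - 1 := by
      have h5 : (5 : ℚ) ≤ (p : ℚ) := by exact_mod_cast hp5
      nlinarith
    have h1 : ((n : ℚ)/2 + 2) * ((p : ℚ)^2 - 1) < k := (lt_div_iff₀ hp2).mp hq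
    have h2 : ((n : ℚ) + 4) * ((p : ℚ)^2 - 1) < 2 * k := by nlinarith
    exact aux2 n k hn hk hdvd (by exact_mod_cast h2)
  · -- Statement (3): finiteness
    intro n hn
    apply Set.Finite.subset (Set.finite_Icc 2 ((n + 4) * (P ^ 2 - 1)))
    intro k hk
    have hk' : mGhost P a s n k ≠ 0 := hk
    have hcond : 2 ≤ k ∧ (P - 1) ∣ (k - kEps P a s) ∧ dUr P a s k < n ∧
        n < dIw P a s k - dUr P a s k := by
      by_contra hc
      exact hk' (by rw [mGhost, if_neg hc])
    obtain ⟨hk2, hdvd, hlt, -⟩ := hcond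
    rw [Set.mem_Icc]
    refine ⟨hk2, ?_⟩
    by_contra hbig
    push_neg at hbig
    have h2k : (n + 4) * (P ^ 2 - 1) < 2 * k := by nlinarith
    exact absurd (aux2 n k hn hk2 hdvd h2k) (by omega)
  · -- Statement (4): integrality of coefficients
    intro n hn i
    have hfin : {k : ℤ | mGhost P a s n k ≠ 0}.Finite := by
      apply Set.Finite.subset (Set.finite_Icc 2 ((n + 4) * (P ^ 2 - 1)))
      intro k hk
      have hk' : mGhost P a s n k ≠ 0 := hk
      have hcond : 2 ≤ k ∧ (P - 1) ∣ (k - kEps P a s) ∧ dUr P a s k < n ∧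
          n < dIw P a s k - dUr P a s k := by
        by_contra hc
        exact hk' (by rw [mGhost, if_neg hc])
      obtain ⟨hk2, hdvd, hlt, -⟩ := hcond
      rw [Set.mem_Icc]
      refine ⟨hk2, ?_⟩
      by_contra hbig
      push_neg at hbig
      have h2k : (n + 4) * (P ^ 2 - 1) < 2 * k := by nlinarith
      exact absurd (aux2 n k hn hk2 hdvd h2k) (by omega)
    have hsub : Function.mulSupport
        (fun k : ℤ => (X - C (wk p k)) ^ mGhost P a s n k) ⊆ ↑hfin.toFinset := by
      intro k hk
      rw [Function.mem_mulSupport] at hk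
      rw [Set.Finite.coe_toFinset]
      intro h0
      exact hk (by rw [h0, pow_zero])
    have hgg : gg p a s n = ∏ k ∈ hfin.toFinset, (X - C (wk p k)) ^ mGhost P a s n k :=
      finprod_eq_prod_of_mulSupport_subset _ hsub
    have hwk : ∀ k : ℤ, ‖wk p k‖ ≤ 1 := by
      intro k
      apply LGaux.norm_exp_sub_one_le
      have hx : ((p : ℚ_[p]) * ((k : ℚ_[p]) - 2)) = (p : ℚ_[p]) * (((k - 2 : ℤ)) : ℚ_[p]) := by
        push_cast; ring
      rw [hx, norm_mul, Padic.norm_p]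
      calc ((p:ℝ))⁻¹ * ‖((k - 2 : ℤ) : ℚ_[p])‖ ≤ ((p:ℝ))⁻¹ * 1 := by
            apply mul_le_mul_of_nonneg_left (Padic.norm_int_le_one _)
            positivity
        _ = ((p:ℝ))⁻¹ := mul_one _
    rw [hgg]
    revert i
    refine Finset.prod_induction _ (fun f : Polynomial ℚ_[p] => ∀ i : ℕ, ‖f.coeff i‖ ≤ 1)
      (fun f g hf hg => LGaux.coeff_mul_le hf hg) LGaux.coeff_one_le ?_
    intro k _
    exact LGaux.coeff_XC_pow_le (hwk k) _


end LocalGhost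

end
end

section
/- Let p be a prime and let A, B be positive integers. Then (Dig_p(A) + Dig_p(B) − Dig_p(A+B))/(p−1) + ⌊ln B/ln p⌋ ≥ max{v_p(x) : x ∈ ℤ, A < x ≤ A+B}, where v_p is the p-adic valuation. -/
/-- The main combinatorial lemma: the `p`-adic valuation of any `x` with `A < x ≤ A + B`
is at most the number of carries when adding `A` and `B` in base `p`, plus `Nat.log p B`. -/
theorem statement10_aux (p : ℕ) (hp : p.Prime) (A B : ℕ) (hA : 0 < A) (hB : 0 < B)
    (x : ℕ) (hx1 : A < x) (hx2 : x ≤ A + B) :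
    padicValNat p x ≤ padicValNat p ((A + B).choose B) + Nat.log p B := by
  haveI : Fact p.Prime := ⟨hp⟩
  set v := padicValNat p x with hv
  set k := Nat.log p B with hk
  rcases le_or_gt v k with h | h
  · omega
  have hp1 : 1 < p := hp.one_lt
  have hxpos : 0 < x := by omega
  have hpv : p ^ v ∣ x := pow_padicValNat_dvd
  have hb : Nat.log p (A + B) < Nat.log p (A + B) + 1 := Nat.lt_succ_self _
  have hkum := padicValNat_choose' (p := p) (n := A) (k := B) hb
  rw [hkum]
  have hvle : v ≤ Nat.log p (A + B) := by
    apply Nat.le_log_of_pow_le hp1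
    calc p ^ v ≤ x := Nat.le_of_dvd hxpos hpv
    _ ≤ A + B := hx2
  have hsub : Finset.Ico (k + 1) (v + 1) ⊆
      (Finset.Ico 1 (Nat.log p (A + B) + 1)).filter
        fun i => p ^ i ≤ B % p ^ i + A % p ^ i := by
    intro i hi
    simp only [Finset.mem_Ico, Finset.mem_filter] at hi ⊢
    obtain ⟨hi1, hi2⟩ := hi
    refine ⟨⟨by omega, by omega⟩, ?_⟩
    have hpipos : 0 < p ^ i := Nat.pow_pos (n := i) (by omega)
    have hBlt : B < p ^ i := by
      calc B < p ^ (k + 1) := Nat.lt_pow_succ_log_self hp1 B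
      _ ≤ p ^ i := Nat.pow_le_pow_right (by omega) hi1
    have hpi : p ^ i ∣ x := dvd_trans (pow_dvd_pow p (by omega)) hpv
    set j := x - A with hj
    have hj1 : 1 ≤ j := by omega
    have hjB : j ≤ B := by omega
    have h0 : (A % p ^ i + j) % p ^ i = 0 := by
      have hmeq : (A % p ^ i + j) % p ^ i = (A + j) % p ^ i :=
        ((Nat.mod_modEq A (p ^ i)).add_right j)
      rw [hmeq, show A + j = x by omega]
      obtain ⟨q, hq⟩ := hpi
      simp [hq, Nat.mul_mod_right]
    have hdvd : p ^ i ∣ A % p ^ i + j := Nat.dvd_of_mod_eq_zero h0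
    have hle : p ^ i ≤ A % p ^ i + j := Nat.le_of_dvd (Nat.lt_of_lt_of_le hj1 (Nat.le_add_left j (A % p ^ i))) hdvd
    have hBmod : B % p ^ i = B := Nat.mod_eq_of_lt hBlt
    rw [hBmod]
    omega
  have hcard := Finset.card_le_card hsub
  rw [Nat.card_Ico] at hcard
  omega

/-- For a prime `p` and positive integers `A`, `B`, the number of carries
`(Dig_p A + Dig_p B - Dig_p (A+B))/(p-1)` plus `⌊ln B / ln p⌋` bounds from above the `p`-adic
valuation of every integer `x` with `A < x ≤ A + B`; i.e. it is at least the maximum of those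
valuations. -/
theorem statement10 (p : ℕ) (hp : p.Prime) (A B : ℕ) (hA : 0 < A) (hB : 0 < B)
    (x : ℕ) (hx1 : A < x) (hx2 : x ≤ A + B) :
    (padicValNat p x : ℝ) ≤
      ((((Nat.digits p A).sum : ℤ) + ((Nat.digits p B).sum : ℤ)
          - ((Nat.digits p (A + B)).sum : ℤ) : ℤ) : ℝ) / ((p : ℝ) - 1)
        + ((⌊Real.log (B : ℝ) / Real.log (p : ℝ)⌋ : ℤ) : ℝ) := by
  haveI : Fact p.Prime := ⟨hp⟩
  have hp1 : 1 < p := hp.one_lt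
  set c := padicValNat p ((A + B).choose B) with hc
  -- digit sum identity in ℤ
  have hfac : ∀ n : ℕ, ((p : ℤ) - 1) * (padicValNat p n.factorial : ℤ)
      = (n : ℤ) - ((Nat.digits p n).sum : ℤ) := by
    intro n
    have h1 := sub_one_mul_padicValNat_factorial (p := p) n
    have h2 : (Nat.digits p n).sum ≤ n := Nat.digit_sum_le p n
    have h3 : (p - 1) * padicValNat p n.factorial + (Nat.digits p n).sum = n := by omega
    have h4 : (((p - 1) * padicValNat p n.factorial : ℕ) : ℤ) + ((Nat.digits p n).sum : ℤ)
        = (n : ℤ) := by exact_mod_cast h3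
    rw [Nat.cast_mul, Nat.cast_sub (Nat.one_le_of_lt hp1), Nat.cast_one] at h4
    linarith
  have hmul : (A + B).choose B * B.factorial * A.factorial = (A + B).factorial := by
    have := Nat.choose_mul_factorial_mul_factorial (Nat.le_add_left B A)
    rwa [Nat.add_sub_cancel] at this
  have hval : padicValNat p ((A + B).factorial) = c + padicValNat p B.factorial
      + padicValNat p A.factorial := by
    rw [← hmul, padicValNat.mul
        (Nat.mul_ne_zero (Nat.choose_pos (Nat.le_add_left B A)).ne' (Nat.factorial_ne_zero B))
        (Nat.factorial_ne_zero A),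
      padicValNat.mul (Nat.choose_pos (Nat.le_add_left B A)).ne' (Nat.factorial_ne_zero B)]
  have hdig : (((Nat.digits p A).sum : ℤ) + ((Nat.digits p B).sum : ℤ)
      - ((Nat.digits p (A + B)).sum : ℤ)) = ((p : ℤ) - 1) * (c : ℤ) := by
    have hval' : (padicValNat p (A + B).factorial : ℤ)
        = (c : ℤ) + padicValNat p B.factorial + padicValNat p A.factorial := by
      exact_mod_cast hval
    have key : ((p : ℤ) - 1) * (c : ℤ)
        = (((A : ℤ) + B) - ((Nat.digits p (A + B)).sum : ℤ))
          - ((B : ℤ) - ((Nat.digits p B).sum : ℤ)) - ((A : ℤ) - ((Nat.digits p A).sum : ℤ)) := by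
      have h1 := hfac A
      have h2 := hfac B
      have h3 := hfac (A + B)
      rw [hval'] at h3
      rw [Nat.cast_add] at h3
      linear_combination h3 - h1 - h2
    linarith [key]
  have hplt : (0 : ℝ) < (p : ℝ) - 1 := by
    have : (1 : ℝ) < (p : ℝ) := by exact_mod_cast hp1
    linarith
  have hdiv : ((((Nat.digits p A).sum : ℤ) + ((Nat.digits p B).sum : ℤ)
      - ((Nat.digits p (A + B)).sum : ℤ) : ℤ) : ℝ) / ((p : ℝ) - 1) = (c : ℝ) := by
    rw [hdig]
    push_cast
    field_simp
  rw [hdiv]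
  -- floor of the real log is Nat.log
  have hfloor : ⌊Real.log (B : ℝ) / Real.log (p : ℝ)⌋ = (Nat.log p B : ℤ) := by
    rw [Real.log_div_log, Real.floor_logb_natCast (Nat.cast_nonneg B), Int.log_natCast]
  rw [hfloor]
  have := statement10_aux p hp A B hA hB x hx1 hx2
  push_cast
  exact_mod_cast this
end

section
/- Let p ≥ 3 be a prime and let m, N be nonnegative integers. Then Dig_p((p+1)·N) ≤ Dig_p(N) + Dig_p(N+m) + (p−2)·m. -/
/-!
Strengthen the claim to `Dig((p+1)N + c(p-1)) ≤ Dig(N) + Dig(N+m+c) + (p-2)(Dig(m) + c)` with a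
carry `c ∈ {0, 1}`, and induct on the base-`p` digits. With `N = r + pq` and `m = t + ps`, the
number `(p+1)N` has lowest digit `r` above `(p+1)q + r`, whose digit sum exceeds that of `(p+1)q`
by at most `r` (subadditivity of digit sums, a consequence of Legendre's formula). If the lowest
digits of `N + m + c` do not carry, apply the hypothesis to `(q, s)`. If they do, apply it to
`(q, s+1)`: this costs `2(p-1)`, paid for by `(p-1)t` and by the carry that adding `c(p-1)`
causes in `(p+1)N`, which suffices unless `r = p-1` and `t + c = 1`. There the carry is handed on
instead: apply the hypothesis to `(q, s)` with `c = 1`.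
-/

namespace Nat

theorem digits_sum_add_base_mul {b r : ℕ} (hb : 1 < b) (hr : r < b) (a : ℕ) :
    (b.digits (r + b * a)).sum = r + (b.digits a).sum := by
  rcases eq_or_ne r 0 with rfl | hr0
  · rcases eq_or_ne a 0 with rfl | ha0
    · simp
    · rw [digits_add b hb 0 a hr (Or.inr ha0), List.sum_cons]
  · rw [digits_add b hb r a hr (Or.inl hr0), List.sum_cons]

theorem digits_sum_base_mul {b : ℕ} (hb : 1 < b) (a : ℕ) :
    (b.digits (b * a)).sum = (b.digits a).sum := by
  simpa using digits_sum_add_base_mul hb (zero_lt_of_lt hb) a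

variable {p : ℕ} [hp : Fact p.Prime]

theorem digits_sum_add_le (a b : ℕ) :
    (p.digits (a + b)).sum ≤ (p.digits a).sum + (p.digits b).sum := by
  have hv : padicValNat p (a !) + padicValNat p (b !) ≤ padicValNat p (a + b)! := by
    rw [← add_choose_mul_factorial_mul_factorial a b,
      padicValNat.mul (mul_ne_zero (choose_pos (le_add_left _ _)).ne' (factorial_ne_zero _))
        (factorial_ne_zero _),
      padicValNat.mul (choose_pos (le_add_left _ _)).ne' (factorial_ne_zero _)]
    omega
  have hmul := Nat.mul_le_mul_left (p - 1) hv
  rw [Nat.mul_add, sub_one_mul_padicValNat_factorial, sub_one_mul_padicValNat_factorial,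
    sub_one_mul_padicValNat_factorial] at hmul
  have := digit_sum_le p a
  have := digit_sum_le p b
  have := digit_sum_le p (a + b)
  omega

theorem digits_sum_add_le_digits_sum_add (a k : ℕ) :
    (p.digits (a + k)).sum ≤ (p.digits a).sum + k :=
  (digits_sum_add_le a k).trans (Nat.add_le_add_left (digit_sum_le p k) _)

theorem digits_sum_succ_mul_add_le (r q x : ℕ) :
    (p.digits ((p + 1) * (r + p * q) + x)).sum ≤ (p.digits ((p + 1) * q)).sum + 2 * r + x := by
  have hsplit : (p + 1) * (r + p * q) + x = (r + x) + p * ((p + 1) * q + r) := by ring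
  calc (p.digits ((p + 1) * (r + p * q) + x)).sum
      ≤ (p.digits (r + x)).sum + (p.digits ((p + 1) * q + r)).sum := by
        rw [hsplit, ← digits_sum_base_mul hp.out.one_lt ((p + 1) * q + r)]
        exact digits_sum_add_le _ _
    _ ≤ (r + x) + ((p.digits ((p + 1) * q)).sum + r) :=
        Nat.add_le_add (digit_sum_le p _) (digits_sum_add_le_digits_sum_add _ _)
    _ = _ := by ring

theorem digits_sum_succ_mul_add_le_of_carry {r q x : ℕ} (hcarry : p ≤ r + x) :
    (p.digits ((p + 1) * (r + p * q) + x)).sum + (p - 1) ≤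
      (p.digits ((p + 1) * q)).sum + 2 * r + x := by
  obtain ⟨d, hd⟩ := Nat.exists_eq_add_of_le hcarry
  have hsplit : (p + 1) * (r + p * q) + x = d + p * ((p + 1) * q + (r + 1)) :=
    calc (p + 1) * (r + p * q) + x = (r + x) + p * ((p + 1) * q + r) := by ring
      _ = _ := by rw [hd]; ring
  have := digits_sum_add_le_digits_sum_add (p := p) ((p + 1) * q) (r + 1)
  have := digit_sum_le p d
  have := hp.out.one_lt
  rw [hsplit]
  grw [digits_sum_add_le (p := p), digits_sum_base_mul hp.out.one_lt]
  omega

theorem digits_sum_succ_mul_pred_add_le {q c : ℕ} (hc : c ≤ 1) :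
    (p.digits ((p + 1) * ((p - 1) + p * q) + c * (p - 1))).sum ≤
      (p.digits ((p + 1) * q + (p - 1))).sum + (p - 1) := by
  have hp2 := hp.out.two_le
  obtain rfl | rfl : c = 0 ∨ c = 1 := by omega
  · have hsplit :
        (p + 1) * ((p - 1) + p * q) + 0 * (p - 1) = (p - 1) + p * ((p + 1) * q + (p - 1)) := by
      obtain ⟨P, rfl⟩ : ∃ P, p = P + 2 := ⟨p - 2, by omega⟩
      simp only [show P + 2 - 1 = P + 1 by omega]; ring
    rw [hsplit, digits_sum_add_base_mul hp.out.one_lt (by omega)]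
    omega
  · have hsplit : (p + 1) * ((p - 1) + p * q) + 1 * (p - 1) =
        (p - 2) + p * ((p + 1) * q + (p - 1) + 1) := by
      obtain ⟨P, rfl⟩ : ∃ P, p = P + 2 := ⟨p - 2, by omega⟩
      simp only [show P + 2 - 1 = P + 1 by omega, show P + 2 - 2 = P by omega]; ring
    rw [hsplit, digits_sum_add_base_mul hp.out.one_lt (by omega)]
    have := digits_sum_add_le_digits_sum_add (p := p) ((p + 1) * q + (p - 1)) 1
    omega

theorem digits_sum_succ_mul_add_carry_le_add_base_mul (hp3 : 3 ≤ p) {q : ℕ}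
    (ih : ∀ m c, c ≤ 1 → (p.digits ((p + 1) * q + c * (p - 1))).sum ≤
      (p.digits q).sum + (p.digits (q + m + c)).sum + (p - 2) * ((p.digits m).sum + c))
    {r : ℕ} (hr : r < p) (m : ℕ) {c : ℕ} (hc : c ≤ 1) :
    (p.digits ((p + 1) * (r + p * q) + c * (p - 1))).sum ≤
      (p.digits (r + p * q)).sum + (p.digits (r + p * q + m + c)).sum +
        (p - 2) * ((p.digits m).sum + c) := by
  have hp1 := hp.out.one_lt
  have hp12 : p - 1 = p - 2 + 1 := by omega
  have hp2 : p = p - 2 + 2 := by omega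
  obtain ⟨t, s, ht, rfl⟩ : ∃ t s, t < p ∧ m = t + p * s :=
    ⟨m % p, m / p, mod_lt _ (by omega), (mod_add_div m p).symm⟩
  rw [digits_sum_add_base_mul hp1 hr, digits_sum_add_base_mul hp1 ht]
  rcases lt_or_ge (r + t + c) p with hnc | hcarry
  · have hsplit : r + p * q + (t + p * s) + c = (r + t + c) + p * (q + s) := by ring
    rw [hsplit, digits_sum_add_base_mul hp1 hnc]
    have ih := ih s 0 (by omega)
    simp only [zero_mul, add_zero] at ih
    have hbound := digits_sum_succ_mul_add_le (p := p) r q (c * (p - 1))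
    have hcp : c * (p - 1) = c + (p - 2) * c := by rw [hp12]; ring
    linarith [Nat.zero_le ((p - 2) * t)]
  obtain ⟨d, hd⟩ := Nat.exists_eq_add_of_le hcarry
  have hsplit : r + p * q + (t + p * s) + c = d + p * (q + s + 1) := by
    rw [Nat.mul_add, Nat.mul_add]; omega
  rw [hsplit, digits_sum_add_base_mul hp1 (by omega : d < p)]
  by_cases hpass : r = p - 1 ∧ t + c = 1
  · obtain ⟨rfl, htc⟩ := hpass
    have ih := ih s 1 le_rfl
    rw [one_mul] at ih
    have hbound := digits_sum_succ_mul_pred_add_le (p := p) (q := q) hc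
    rw [show t + (p.digits s).sum + c = (p.digits s).sum + 1 by omega]
    linarith
  have ih := ih (s + 1) 0 (by omega)
  simp only [zero_mul, add_zero, ← add_assoc] at ih
  have hs1 := Nat.mul_le_mul_left (p - 2) (digits_sum_add_le_digits_sum_add (p := p) s 1)
  rcases (show 2 ≤ t ∨ (c = 1 ∧ 1 ≤ r ∧ 1 ≤ t) by omega) with ht2 | ⟨rfl, hr1, ht1⟩
  · have hbound := digits_sum_succ_mul_add_le (p := p) r q (c * (p - 1))
    have hcp : c * (p - 1) = c + (p - 2) * c := by rw [hp12]; ring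
    have := Nat.mul_le_mul_left (p - 2) ht2
    linarith
  · have hbound := digits_sum_succ_mul_add_le_of_carry (p := p) (q := q)
      (show p ≤ r + 1 * (p - 1) by omega)
    have := Nat.mul_le_mul_left (p - 2) ht1
    linarith

theorem digits_sum_succ_mul_add_carry_le (hp3 : 3 ≤ p) (N m : ℕ) {c : ℕ} (hc : c ≤ 1) :
    (p.digits ((p + 1) * N + c * (p - 1))).sum ≤
      (p.digits N).sum + (p.digits (N + m + c)).sum + (p - 2) * ((p.digits m).sum + c) := by
  induction N using Nat.strong_induction_on generalizing m c with
  | _ N ih =>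
  have hp1 := hp.out.one_lt
  rcases eq_or_ne N 0 with rfl | hN
  · obtain rfl | rfl : c = 0 ∨ c = 1 := by omega
    · simp
    · have hpos : 0 < (p.digits (m + 1)).sum := by
        have := sub_one_mul_padicValNat_factorial_lt_of_ne_zero p (n := m + 1) (by omega)
        rw [sub_one_mul_padicValNat_factorial] at this
        omega
      simp only [mul_zero, zero_add, one_mul, digits_zero, List.sum_nil]
      rw [digits_of_lt p (p - 1) (by omega) (by omega), List.sum_singleton]
      have := Nat.le_mul_of_pos_right (p - 2) (by omega : 0 < (p.digits m).sum + 1)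
      omega
  obtain ⟨r, q, hr, rfl⟩ : ∃ r q, r < p ∧ N = r + p * q :=
    ⟨N % p, N / p, mod_lt _ (by omega), (mod_add_div N p).symm⟩
  have hq : q < r + p * q := by
    have := Nat.mul_le_mul_right q hp3
    omega
  exact digits_sum_succ_mul_add_carry_le_add_base_mul hp3 (fun m c hc ↦ ih q hq m hc) hr m hc

end Nat

/-- For a prime `p ≥ 3` and nonnegative integers `m`, `N`:
`Dig_p((p+1)·N) ≤ Dig_p(N) + Dig_p(N+m) + (p-2)·m`, where `Dig_p` is the sum of base-`p`
digits. -/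
theorem statement11 (p : ℕ) (hp : p.Prime) (hp3 : 3 ≤ p) (m N : ℕ) :
    (Nat.digits p ((p + 1) * N)).sum ≤
      (Nat.digits p N).sum + (Nat.digits p (N + m)).sum + (p - 2) * m := by
  have := Fact.mk hp
  calc (Nat.digits p ((p + 1) * N)).sum
      ≤ (Nat.digits p N).sum + (Nat.digits p (N + m)).sum + (p - 2) * (Nat.digits p m).sum := by
        simpa using Nat.digits_sum_succ_mul_add_carry_le hp3 N m zero_le_one
    _ ≤ _ := by grw [Nat.digit_sum_le p m]
end
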